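/- Let 0 < q < 1, δ ∈ {0,1,2} and ν ∈ ℝ. Define g(s) = q^{−δs²/4 + (2+δ)s/2} Γ_{q²}((s+iν)/2) Γ_{q²}((s−iν)/2) for s ∈ ℂ such that both q²-Gamma values are defined. Then g satisfies the recurrence q^{−s} (1 − q^{s+iν})(1 − q^{s−iν}) g(s) = (1−q²)² q^{(δ−1)s − 2} g(s+2) for all such s; i.e. g is the Mellin-space solution of the relativistic Toda q-difference equation. -/

import Mathlib

/-- The infinite q-Pochhammer symbol `(a;Q)_∞ = ∏_{j≥0} (1 − a Q^j)`. -/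
noncomputable def qPochInf (Q a : ℂ) : ℂ :=
  ∏' j : ℕ, (1 - a * Q ^ j)

/-- `q^w = exp(w ln q)` for real `q > 0` and complex `w`. -/
noncomputable def qpow (q : ℝ) (w : ℂ) : ℂ := Complex.exp (w * (Real.log q : ℂ))

/-- The q²-Gamma function `Γ_{q²}(x) = (q²;q²)_∞(1−q²)^{1−x}/(q^{2x};q²)_∞`. -/
noncomputable def qGamma2 (q : ℝ) (x : ℂ) : ℂ :=
  qPochInf ((q : ℂ) ^ 2) ((q : ℂ) ^ 2)
    * Complex.exp ((1 - x) * (Real.log (1 - q ^ 2) : ℂ))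
    / qPochInf ((q : ℂ) ^ 2) (qpow q (2 * x))

/-- The Mellin-space integrand
`g(s) = q^{−δs²/4 + (2+δ)s/2} Γ_{q²}((s+iν)/2) Γ_{q²}((s−iν)/2)`. -/
noncomputable def gMB (q : ℝ) (δ : ℕ) (ν : ℝ) (s : ℂ) : ℂ :=
  qpow q (-((δ : ℂ) * s ^ 2 / 4) + (2 + (δ : ℂ)) * s / 2)
    * qGamma2 q ((s + Complex.I * ν) / 2) * qGamma2 q ((s - Complex.I * ν) / 2)

/-!
Peeling the first factor off `(q^{2x};q²)_∞` gives the functional equation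
`(1 − q²) Γ_{q²}(x + 1) = (1 − q^{2x}) Γ_{q²}(x)`. Replacing `s` by `s + 2` raises both arguments
`(s ± iν)/2` by one, producing the factors `(1 − q^{s ± iν})/(1 − q²)`, while the Gaussian prefactor
gains `q^{2 − δs}`, which is exactly `q^{-s} / q^{(δ−1)s − 2}`.
-/

open Complex

lemma qPochInf_one (Q : ℂ) : qPochInf Q 1 = 0 :=
  tprod_of_exists_eq_zero ⟨0, by simp⟩

lemma multipliable_one_sub_mul_pow {Q : ℂ} (hQ : ‖Q‖ < 1) (a : ℂ) :
    Multipliable fun j : ℕ ↦ 1 - a * Q ^ j := by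
  simpa [sub_eq_add_neg] using multipliable_one_add_of_summable (f := fun j : ℕ ↦ -(a * Q ^ j))
    (by simpa [norm_mul, norm_pow] using
      (summable_geometric_of_lt_one (norm_nonneg Q) hQ).mul_left ‖a‖)

lemma qPochInf_eq_one_sub_mul {Q : ℂ} (hQ : ‖Q‖ < 1) (a : ℂ) :
    qPochInf Q a = (1 - a) * qPochInf Q (Q * a) := by
  have hshift (j : ℕ) : 1 - a * Q ^ (j + 1) = 1 - Q * a * Q ^ j := by ring
  rw [qPochInf, qPochInf, tprod_eq_zero_mul' ((multipliable_one_sub_mul_pow hQ (Q * a)).congr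
    fun j ↦ (hshift j).symm), pow_zero, mul_one, tprod_congr hshift]

lemma qpow_add (q : ℝ) (w z : ℂ) : qpow q (w + z) = qpow q w * qpow q z := by
  rw [qpow, qpow, qpow, add_mul, exp_add]

lemma qpow_two {q : ℝ} (hq : 0 < q) : qpow q 2 = (q : ℂ) ^ 2 := by
  rw [qpow, ← ofReal_ofNat, ← ofReal_mul, ← ofReal_exp, ← Real.log_rpow hq,
    Real.exp_log (by positivity)]
  norm_cast

lemma qGamma2_add_one {q : ℝ} (hq0 : 0 < q) (hq1 : q < 1) {x : ℂ} (hx : qpow q (2 * x) ≠ 1) :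
    (1 - (q : ℂ) ^ 2) * qGamma2 q (x + 1) = (1 - qpow q (2 * x)) * qGamma2 q x := by
  have hQ : ‖(q : ℂ) ^ 2‖ < 1 := by
    rw [norm_pow, norm_real, Real.norm_of_nonneg hq0.le]
    exact pow_lt_one₀ hq0.le hq1 two_ne_zero
  have hq2 : (0 : ℝ) < 1 - q ^ 2 := by nlinarith
  have hQ1 : (1 : ℂ) - (q : ℂ) ^ 2 ≠ 0 := by exact_mod_cast hq2.ne'
  have hx1 : (1 : ℂ) - qpow q (2 * x) ≠ 0 := sub_ne_zero.2 hx.symm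
  have hexp : exp ((1 - (x + 1)) * (Real.log (1 - q ^ 2) : ℂ))
      = exp ((1 - x) * (Real.log (1 - q ^ 2) : ℂ)) / (1 - (q : ℂ) ^ 2) := by
    rw [show (1 - (x + 1)) * (Real.log (1 - q ^ 2) : ℂ)
        = (1 - x) * (Real.log (1 - q ^ 2) : ℂ) - Real.log (1 - q ^ 2) by ring, exp_sub,
      ← ofReal_exp, Real.exp_log hq2]
    push_cast; rfl
  have harg : qpow q (2 * (x + 1)) = (q : ℂ) ^ 2 * qpow q (2 * x) := by
    rw [mul_add, mul_one, add_comm, qpow_add, qpow_two hq0]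
  rw [qGamma2, qGamma2, hexp, harg, qPochInf_eq_one_sub_mul hQ (qpow q (2 * x)),
    mul_div_assoc' (1 - qpow q (2 * x)), mul_div_mul_left _ _ hx1]
  field_simp

theorem gMB_recurrence_general (q : ℝ) (hq0 : 0 < q) (hq1 : q < 1)
    (δ : ℕ) (ν : ℝ) (s : ℂ)
    (h1 : qPochInf ((q : ℂ) ^ 2) (qpow q (s + Complex.I * ν)) ≠ 0)
    (h2 : qPochInf ((q : ℂ) ^ 2) (qpow q (s - Complex.I * ν)) ≠ 0) :
    qpow q (-s) * (1 - qpow q (s + Complex.I * ν)) * (1 - qpow q (s - Complex.I * ν))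
        * gMB q δ ν s
      = (1 - (q : ℂ) ^ 2) ^ 2 * qpow q (((δ : ℂ) - 1) * s - 2) * gMB q δ ν (s + 2) := by
  have htwo (w : ℂ) : 2 * (w / 2) = w := mul_div_cancel₀ w two_ne_zero
  have hplus : qpow q (2 * ((s + I * ν) / 2)) ≠ 1 := by
    rw [htwo]; exact fun h ↦ h1 (h ▸ qPochInf_one _)
  have hminus : qpow q (2 * ((s - I * ν) / 2)) ≠ 1 := by
    rw [htwo]; exact fun h ↦ h2 (h ▸ qPochInf_one _)
  have hΓplus := qGamma2_add_one hq0 hq1 hplus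
  have hΓminus := qGamma2_add_one hq0 hq1 hminus
  rw [htwo] at hΓplus hΓminus
  have hprefactor : qpow q (-s) * qpow q (-((δ : ℂ) * s ^ 2 / 4) + (2 + (δ : ℂ)) * s / 2)
      = qpow q (((δ : ℂ) - 1) * s - 2)
        * qpow q (-((δ : ℂ) * (s + 2) ^ 2 / 4) + (2 + (δ : ℂ)) * (s + 2) / 2) := by
    rw [← qpow_add, ← qpow_add]; ring_nf
  rw [gMB, gMB, show (s + 2 + I * ν) / 2 = (s + I * ν) / 2 + 1 by ring,
    show (s + 2 - I * ν) / 2 = (s - I * ν) / 2 + 1 by ring]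
  linear_combination
    (1 - qpow q (s + I * ν)) * (1 - qpow q (s - I * ν))
      * qGamma2 q ((s + I * ν) / 2) * qGamma2 q ((s - I * ν) / 2) * hprefactor
    - qpow q (((δ : ℂ) - 1) * s - 2)
      * qpow q (-((δ : ℂ) * (s + 2) ^ 2 / 4) + (2 + (δ : ℂ)) * (s + 2) / 2)
      * ((1 - (q : ℂ) ^ 2) * qGamma2 q ((s - I * ν) / 2 + 1) * hΓplus
        + (1 - qpow q (s + I * ν)) * qGamma2 q ((s + I * ν) / 2) * hΓminus)

/-- `g(s) = q^{−δs²/4+(2+δ)s/2}Γ_{q²}((s+iν)/2)Γ_{q²}((s−iν)/2)` is the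
Mellin-space solution of the relativistic Toda q-difference equation: it
satisfies `q^{−s}(1−q^{s+iν})(1−q^{s−iν})g(s) = (1−q²)² q^{(δ−1)s−2} g(s+2)`
wherever the q²-Gamma values are defined. -/
theorem gMB_recurrence (q : ℝ) (hq0 : 0 < q) (hq1 : q < 1)
    (δ : ℕ) (hδ : δ = 0 ∨ δ = 1 ∨ δ = 2) (ν : ℝ) (s : ℂ)
    (h1 : qPochInf ((q : ℂ) ^ 2) (qpow q (s + Complex.I * ν)) ≠ 0)
    (h2 : qPochInf ((q : ℂ) ^ 2) (qpow q (s - Complex.I * ν)) ≠ 0) :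
    qpow q (-s) * (1 - qpow q (s + Complex.I * ν)) * (1 - qpow q (s - Complex.I * ν))
        * gMB q δ ν s
      = (1 - (q : ℂ) ^ 2) ^ 2 * qpow q (((δ : ℂ) - 1) * s - 2) * gMB q δ ν (s + 2) :=
  gMB_recurrence_general q hq0 hq1 δ ν s h1 h2
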